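/- Let P be the Poisson distribution with parameter λ ≥ 2, with tilt_P(x) = max(P(x−1)/P(x), P(x+1)/P(x)) = max(x/λ, λ/(x+1)) for x ≥ 0 (where P(−1)/P(0) is interpreted as 0, so tilt_P(0) = λ). Then E_{x∼P}[tilt_P(x)²] ≤ λ²·E_{x∼P}[1/(x+1)²] + (λ² + λ)/λ², and combining with E_{x∼P}[1/(x+1)²] ≤ e^{−λ/8} + 4/λ² gives E_{x∼P}[tilt_P(x)²] ≤ λ²e^{−λ/8} + 6 = O(1). -/

import Mathlib

/-!
Since `max a b ^ 2 ≤ a ^ 2 + b ^ 2`, the tilt moment is at most `E[X²] / λ² + λ² E[1/(X+1)²]`,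
and `E[X²] = λ² + λ` follows from the Stein–Chen identity `E[X g(X)] = λ E[g(X + 1)]`.
For the numerical bound, `1/(x+1)² ≤ 2/((x+1)(x+2))` and `P(x)/((x+1)(x+2)) = P(x+2)/λ²` give
`λ² E[1/(X+1)²] ≤ 2`, while `(λ² + λ)/λ² ≤ 3/2` for `λ ≥ 2`.
-/

open Real Nat

/-- `ProbabilityTheory.poissonPMFReal` with a real rather than `ℝ≥0` parameter. -/
noncomputable def poissonWeight (lam : ℝ) (n : ℕ) : ℝ := exp (-lam) * lam ^ n / n !

lemma poissonWeight_nonneg {lam : ℝ} (hlam : 0 ≤ lam) (n : ℕ) : 0 ≤ poissonWeight lam n := by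
  unfold poissonWeight; positivity

lemma hasSum_poissonWeight (lam : ℝ) : HasSum (poissonWeight lam) 1 := by
  have h := (NormedSpace.expSeries_div_hasSum_exp lam).mul_left (exp (-lam))
  rw [← exp_eq_exp_ℝ, ← exp_add, neg_add_cancel, exp_zero] at h
  exact h.congr_fun fun n ↦ mul_div_assoc _ _ _

lemma poissonWeight_succ_mul (lam : ℝ) (n : ℕ) :
    poissonWeight lam (n + 1) * (n + 1) = lam * poissonWeight lam n := by
  simp only [poissonWeight, factorial_succ, cast_mul, cast_succ, pow_succ]
  field_simp

lemma poissonWeight_add_two_mul (lam : ℝ) (n : ℕ) :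
    poissonWeight lam (n + 2) * ((n + 1) * (n + 2)) = lam ^ 2 * poissonWeight lam n := by
  have h := poissonWeight_succ_mul lam (n + 1)
  push_cast at h
  calc poissonWeight lam (n + 2) * ((n + 1) * (n + 2))
      = poissonWeight lam (n + 1 + 1) * (n + 1 + 1) * (n + 1) := by ring
    _ = lam ^ 2 * poissonWeight lam n := by
      rw [h, mul_assoc, poissonWeight_succ_mul]; ring

/-- The Stein–Chen identity `E[X g(X)] = λ E[g(X + 1)]`. -/
lemma HasSum.poissonWeight_mul_cast_mul {lam s : ℝ} {g : ℕ → ℝ}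
    (h : HasSum (fun n ↦ poissonWeight lam n * g (n + 1)) s) :
    HasSum (fun n ↦ poissonWeight lam n * (n * g n)) (lam * s) := by
  rw [← hasSum_nat_add_iff' 1, Finset.sum_range_one, cast_zero, zero_mul, mul_zero, sub_zero]
  refine (h.mul_left lam).congr_fun fun n ↦ ?_
  rw [cast_succ, ← mul_assoc, poissonWeight_succ_mul, mul_assoc]

lemma hasSum_poissonWeight_mul_cast (lam : ℝ) :
    HasSum (fun n ↦ poissonWeight lam n * n) lam := by
  have h := HasSum.poissonWeight_mul_cast_mul (g := fun _ ↦ (1 : ℝ))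
    (by simpa using hasSum_poissonWeight lam)
  simpa using h

lemma hasSum_poissonWeight_mul_cast_sq (lam : ℝ) :
    HasSum (fun n ↦ poissonWeight lam n * (n : ℝ) ^ 2) (lam ^ 2 + lam) := by
  have h : HasSum (fun n ↦ poissonWeight lam n * ((n + 1 : ℕ) : ℝ)) (lam + 1) := by
    push_cast; simp only [mul_add, mul_one]
    exact (hasSum_poissonWeight_mul_cast lam).add (hasSum_poissonWeight lam)
  convert h.poissonWeight_mul_cast_mul (g := fun n ↦ (n : ℝ)) using 1
  · ext n; ring
  · ring

lemma max_sq_le_sq_add_sq {α : Type*} [Ring α] [LinearOrder α] [IsStrictOrderedRing α] (a b : α) :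
    max a b ^ 2 ≤ a ^ 2 + b ^ 2 := by
  rcases max_choice a b with h | h <;> rw [h]
  · exact le_add_of_nonneg_right (sq_nonneg b)
  · exact le_add_of_nonneg_left (sq_nonneg a)

lemma tsum_poissonWeight_add_two_le_one {lam : ℝ} (hlam : 0 ≤ lam) :
    ∑' n, poissonWeight lam (n + 2) ≤ 1 := by
  rw [((hasSum_nat_add_iff' 2).mpr (hasSum_poissonWeight lam)).tsum_eq, sub_le_self_iff]
  exact Finset.sum_nonneg fun n _ ↦ poissonWeight_nonneg hlam n

lemma poissonWeight_mul_inv_sq_le {lam : ℝ} (hlam : 0 < lam) (n : ℕ) :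
    poissonWeight lam n * (1 / ((n : ℝ) + 1) ^ 2) ≤ 2 / lam ^ 2 * poissonWeight lam (n + 2) := by
  have h := poissonWeight_add_two_mul lam n
  calc poissonWeight lam n * (1 / ((n : ℝ) + 1) ^ 2)
      = poissonWeight lam (n + 2) / lam ^ 2 * ((n + 2) / (n + 1)) := by
        field_simp
        linear_combination h.symm
    _ ≤ poissonWeight lam (n + 2) / lam ^ 2 * 2 := by
        gcongr
        · exact div_nonneg (poissonWeight_nonneg hlam.le _) (sq_nonneg lam)
        · rw [div_le_iff₀ (by positivity)]; linarith
    _ = 2 / lam ^ 2 * poissonWeight lam (n + 2) := by ring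

lemma summable_poissonWeight_add_two (lam : ℝ) :
    Summable fun n ↦ poissonWeight lam (n + 2) :=
  (summable_nat_add_iff 2).mpr (hasSum_poissonWeight lam).summable

lemma summable_poissonWeight_mul_inv_sq {lam : ℝ} (hlam : 0 < lam) :
    Summable fun n : ℕ ↦ poissonWeight lam n * (1 / ((n : ℝ) + 1) ^ 2) :=
  ((summable_poissonWeight_add_two lam).mul_left _).of_nonneg_of_le
    (fun n ↦ by have := poissonWeight_nonneg hlam.le n; positivity)
    (poissonWeight_mul_inv_sq_le hlam)

lemma tsum_poissonWeight_mul_inv_sq_le {lam : ℝ} (hlam : 0 < lam) :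
    ∑' n : ℕ, poissonWeight lam n * (1 / ((n : ℝ) + 1) ^ 2) ≤ 2 / lam ^ 2 := by
  calc ∑' n : ℕ, poissonWeight lam n * (1 / ((n : ℝ) + 1) ^ 2)
      ≤ ∑' n, 2 / lam ^ 2 * poissonWeight lam (n + 2) :=
        Summable.tsum_le_tsum (poissonWeight_mul_inv_sq_le hlam)
          (summable_poissonWeight_mul_inv_sq hlam)
          ((summable_poissonWeight_add_two lam).mul_left _)
    _ = 2 / lam ^ 2 * ∑' n, poissonWeight lam (n + 2) := tsum_mul_left
    _ ≤ 2 / lam ^ 2 :=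
        mul_le_of_le_one_right (by positivity) (tsum_poissonWeight_add_two_le_one hlam.le)

lemma tsum_poissonWeight_mul_max_sq_le {lam : ℝ} (hlam : 0 < lam) :
    ∑' n : ℕ, poissonWeight lam n * max ((n : ℝ) / lam) (lam / ((n : ℝ) + 1)) ^ 2 ≤
      lam ^ 2 * ∑' n : ℕ, poissonWeight lam n * (1 / ((n : ℝ) + 1) ^ 2) +
        (lam ^ 2 + lam) / lam ^ 2 := by
  have hsq : HasSum (fun n : ℕ ↦ poissonWeight lam n * ((n : ℝ) / lam) ^ 2)
      ((lam ^ 2 + lam) / lam ^ 2) := by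
    refine ((hasSum_poissonWeight_mul_cast_sq lam).div_const (lam ^ 2)).congr_fun fun n ↦ ?_
    ring
  have hinv := (summable_poissonWeight_mul_inv_sq hlam).mul_left (lam ^ 2)
  have hle : ∀ n : ℕ, poissonWeight lam n * max ((n : ℝ) / lam) (lam / ((n : ℝ) + 1)) ^ 2 ≤
      poissonWeight lam n * ((n : ℝ) / lam) ^ 2 +
        lam ^ 2 * (poissonWeight lam n * (1 / ((n : ℝ) + 1) ^ 2)) := fun n ↦
    calc _ ≤ poissonWeight lam n * (((n : ℝ) / lam) ^ 2 + (lam / ((n : ℝ) + 1)) ^ 2) :=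
          mul_le_mul_of_nonneg_left (max_sq_le_sq_add_sq _ _) (poissonWeight_nonneg hlam.le n)
      _ = _ := by rw [div_pow lam, one_div]; ring
  have hdom := hsq.summable.add hinv
  calc _ ≤ _ := Summable.tsum_le_tsum hle
        (hdom.of_nonneg_of_le (fun n ↦ by have := poissonWeight_nonneg hlam.le n; positivity) hle)
        hdom
    _ = _ := by rw [hsq.summable.tsum_add hinv, hsq.tsum_eq, tsum_mul_left, add_comm]

/-- For `P = Poisson(λ)` with `λ ≥ 2` and `tilt_P(x) = max(x/λ, λ/(x+1))`,
`E[tilt²] ≤ λ²·E[1/(x+1)²] + (λ²+λ)/λ²`, and combining with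
`E[1/(x+1)²] ≤ e^{−λ/8} + 4/λ²` gives `E[tilt²] ≤ λ²e^{−λ/8} + 6`. -/
theorem poisson_tilt_sq_moment (lam : ℝ) (hlam : 2 ≤ lam)
    (tilt : ℕ → ℝ) (htilt : ∀ x : ℕ, tilt x = max ((x : ℝ) / lam) (lam / ((x : ℝ) + 1))) :
    (∑' x : ℕ, (Real.exp (-lam) * lam ^ x / x.factorial) * tilt x ^ 2) ≤
      lam ^ 2 * (∑' x : ℕ, (Real.exp (-lam) * lam ^ x / x.factorial) *
        (1 / ((x : ℝ) + 1) ^ 2)) + (lam ^ 2 + lam) / lam ^ 2 ∧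
    (∑' x : ℕ, (Real.exp (-lam) * lam ^ x / x.factorial) * tilt x ^ 2) ≤
      lam ^ 2 * Real.exp (-lam / 8) + 6 := by
  have hlam0 : 0 < lam := by linarith
  obtain rfl : tilt = fun x : ℕ ↦ max ((x : ℝ) / lam) (lam / ((x : ℝ) + 1)) := funext htilt
  have hmoment := tsum_poissonWeight_mul_max_sq_le hlam0
  have hinv : lam ^ 2 * ∑' x : ℕ, poissonWeight lam x * (1 / ((x : ℝ) + 1) ^ 2) ≤ 2 :=
    (mul_le_mul_of_nonneg_left (tsum_poissonWeight_mul_inv_sq_le hlam0) (sq_nonneg lam)).trans_eq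
      (by field_simp)
  have hmean : (lam ^ 2 + lam) / lam ^ 2 ≤ 3 / 2 := by
    rw [div_le_iff₀ (by positivity)]; nlinarith
  have hexp : 0 ≤ lam ^ 2 * Real.exp (-lam / 8) := by positivity
  exact ⟨hmoment, hmoment.trans (by linarith)⟩
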